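/- arXiv:2403.03778 — 2 statements merged into one kernel-verified Lean document; each statement's English description precedes it below -/
import Mathlib

section
/- Let p₁, …, p_r be random variables in [0,1], each marginally Uniform(0,1) (no independence assumed), and let p_(1) ≤ … ≤ p_(r) be their order statistics. Define Q = (∑_{i'=1}^r 1/i') · min_{1 ≤ i ≤ r} (r/i) p_(i). Then P(Q ≤ α) ≤ α for all α ∈ (0,1). -/
open MeasureTheory Finset
open scoped ENNReal

/-!
Put `H = ∑_{l<r} 1/(l+1)` and `s = α / (H r)`, and let `g` be the step function equal to `1/(l+1)`
on the cell `[l s, (l+1) s]` for `l < r`, so that `∫ g = H s`. If `Q ≤ α`, some order statistic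
satisfies `p₍ᵢ₎ ≤ (i+1) s`, and then `∑ⱼ g(pⱼ) ≥ 1`. By Markov's inequality and the uniform
marginals, `P(Q ≤ α) ≤ ∑ⱼ E g(pⱼ) ≤ r H s = α`, whatever the dependence between the `pⱼ`.
-/

theorem exists_mem_Icc_consecutive {α : Type*} [LinearOrder α] (c : ℕ → α) {x : α} {a b : ℕ}
    (hab : a < b) (hx : x ∈ Set.Icc (c a) (c b)) :
    ∃ l ∈ Set.Ico a b, x ∈ Set.Icc (c l) (c (l + 1)) := by
  induction b, hab using Nat.le_induction with
  | base => exact ⟨a, ⟨le_rfl, a.lt_succ_self⟩, hx⟩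
  | succ b hab ih =>
    by_cases hxb : x ≤ c b
    · obtain ⟨l, ⟨hal, hlb⟩, hl⟩ := ih ⟨hx.1, hxb⟩
      exact ⟨l, ⟨hal, hlb.trans b.lt_succ_self⟩, hl⟩
    · exact ⟨b, ⟨by omega, b.lt_succ_self⟩, (not_le.mp hxb).le, hx.2⟩

noncomputable def harmonicStep (r : ℕ) (s x : ℝ) : ℝ≥0∞ :=
  ∑ l ∈ range r, (Set.Icc (l * s) ((l + 1) * s)).indicator (fun _ => ((l : ℝ≥0∞) + 1)⁻¹) x

theorem measurable_harmonicStep (r : ℕ) (s : ℝ) : Measurable (harmonicStep r s) :=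
  Finset.measurable_sum _ fun _ _ => measurable_const.indicator measurableSet_Icc

theorem lintegral_harmonicStep (r : ℕ) (s : ℝ) :
    ∫⁻ x, harmonicStep r s x = (∑ l ∈ range r, ((l : ℝ≥0∞) + 1)⁻¹) * ENNReal.ofReal s := by
  unfold harmonicStep
  rw [lintegral_finsetSum _ fun _ _ => measurable_const.indicator measurableSet_Icc, sum_mul]
  refine sum_congr rfl fun l _ => ?_
  rw [lintegral_indicator_const measurableSet_Icc, Real.volume_Icc]
  ring_nf

theorem inv_le_harmonicStep {r a b : ℕ} {s x : ℝ} (hab : a < b) (hbr : b ≤ r)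
    (hx : x ∈ Set.Icc (a * s) (b * s)) : (b : ℝ≥0∞)⁻¹ ≤ harmonicStep r s x := by
  obtain ⟨l, ⟨-, hlb⟩, hl⟩ := exists_mem_Icc_consecutive (fun l : ℕ => (l : ℝ) * s) hab hx
  calc (b : ℝ≥0∞)⁻¹ ≤ ((l : ℝ≥0∞) + 1)⁻¹ := by
        rw [ENNReal.inv_le_inv]; exact_mod_cast hlb
    _ = (Set.Icc (l * s) ((l + 1) * s)).indicator (fun _ => ((l : ℝ≥0∞) + 1)⁻¹) x := by
        rw [Set.indicator_of_mem (by exact_mod_cast hl)]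
    _ ≤ harmonicStep r s x :=
        single_le_sum (f := fun l : ℕ => (Set.Icc (l * s) ((l + 1) * s)).indicator
          (fun _ => ((l : ℝ≥0∞) + 1)⁻¹) x) (fun _ _ => zero_le) (mem_range.2 (by omega))

/-- Take the first order statistic `q₍ᵢ₀₎ ≤ (i₀ + 1) s`: each of `q₍₀₎, …, q₍ᵢ₀₎` lies in a cell
of index at most `i₀`, so they contribute at least `(i₀ + 1) / (i₀ + 1) = 1`. -/
theorem one_le_sum_harmonicStep {r : ℕ} (s : ℝ) (q : Fin r → ℝ) (hq : ∀ j, 0 ≤ q j)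
    (h : ∃ i : Fin r, q (Tuple.sort q i) ≤ (i + 1 : ℝ) * s) :
    1 ≤ ∑ j, harmonicStep r s (q j) := by
  set σ := Tuple.sort q
  obtain ⟨i₀, hi₀, hmin⟩ := WellFounded.has_min wellFounded_lt
    {i : Fin r | q (σ i) ≤ (i + 1 : ℝ) * s} h
  have hlow : ∀ m ≤ i₀, (m : ℝ) * s ≤ q (σ m) := by
    intro m hm
    rcases Nat.eq_zero_or_pos m with hm0 | hm0
    · simp [hm0, hq]
    · set m' : Fin r := ⟨m - 1, by omega⟩
      have hm'm : m' < m := Fin.lt_def.2 (by simp [m']; omega)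
      have hm' : ((m' : ℕ) + 1 : ℝ) = m := by simp [m']; norm_cast; omega
      calc (m : ℝ) * s ≤ q (σ m') :=
            le_of_lt (by simpa [hm'] using fun h => hmin m' h (hm'm.trans_le hm))
        _ ≤ q (σ m) := Tuple.monotone_sort q hm'm.le
  have hterm : ∀ m ∈ Iic i₀, ((i₀ : ℝ≥0∞) + 1)⁻¹ ≤ harmonicStep r s (q (σ m)) := fun m hm => by
    have hm := mem_Iic.1 hm
    exact_mod_cast inv_le_harmonicStep (r := r) (Nat.lt_succ_of_le hm) i₀.2
      ⟨hlow m hm, (Tuple.monotone_sort q hm).trans (by exact_mod_cast hi₀)⟩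
  calc 1 = ∑ _m ∈ Iic i₀, ((i₀ : ℝ≥0∞) + 1)⁻¹ := by
        rw [sum_const, Fin.card_Iic, nsmul_eq_mul]; push_cast
        exact (ENNReal.mul_inv_cancel (by positivity) (by simp)).symm
    _ ≤ ∑ m ∈ Iic i₀, harmonicStep r s (q (σ m)) := sum_le_sum hterm
    _ ≤ ∑ m, harmonicStep r s (q (σ m)) := sum_le_sum_of_subset (subset_univ _)
    _ = ∑ j, harmonicStep r s (q j) := Equiv.sum_comp σ fun j => harmonicStep r s (q j)

theorem exists_sort_le_of_mul_inf'_le {r : ℕ} (hne : (univ : Finset (Fin r)).Nonempty)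
    (q : Fin r → ℝ) {H α : ℝ} (hH : 0 < H)
    (h : H * univ.inf' hne (fun i : Fin r => ((r : ℝ) / (i + 1)) * q (Tuple.sort q i)) ≤ α) :
    ∃ i : Fin r, q (Tuple.sort q i) ≤ (i + 1 : ℝ) * (α / (H * r)) := by
  obtain ⟨i, -, hi⟩ := (inf'_le_iff _).1 ((le_div_iff₀' hH).2 h)
  have hr : (0 : ℝ) < r := by exact_mod_cast Fin.pos i
  refine ⟨i, ?_⟩
  calc q (Tuple.sort q i) = (i + 1) / r * ((r / (i + 1)) * q (Tuple.sort q i)) := by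
        field_simp
    _ ≤ (i + 1) / r * (α / H) := by gcongr
    _ = (i + 1 : ℝ) * (α / (H * r)) := by ring

theorem ae_nonneg_of_map_eq_restrict_Icc {Ω : Type*} [MeasurableSpace Ω] {μ : Measure Ω}
    {X : Ω → ℝ} (hX : AEMeasurable X μ) (hunif : μ.map X = volume.restrict (Set.Icc 0 1)) :
    ∀ᵐ ω ∂μ, 0 ≤ X ω :=
  ae_of_ae_map hX (hunif ▸ (ae_restrict_mem measurableSet_Icc).mono fun _ hx => hx.1)

theorem measure_one_le_sum_le_card_mul_lintegral {Ω α ι : Type*} [MeasurableSpace Ω]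
    [MeasurableSpace α] [Fintype ι] {μ : Measure Ω} {ν : Measure α} {X : ι → Ω → α}
    (hX : ∀ i, Measurable (X i)) (hν : ∀ i, μ.map (X i) = ν) {g : α → ℝ≥0∞} (hg : Measurable g) :
    μ {ω | 1 ≤ ∑ i, g (X i ω)} ≤ Fintype.card ι * ∫⁻ x, g x ∂ν := by
  have hgX : ∀ i, Measurable fun ω => g (X i ω) := fun i => hg.comp (hX i)
  calc μ {ω | 1 ≤ ∑ i, g (X i ω)} ≤ ∫⁻ ω, ∑ i, g (X i ω) ∂μ := by
        simpa using
          mul_meas_ge_le_lintegral₀ (Finset.measurable_sum _ fun i _ => hgX i).aemeasurable 1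
    _ = ∑ i, ∫⁻ ω, g (X i ω) ∂μ := lintegral_finsetSum _ fun i _ => hgX i
    _ = Fintype.card ι * ∫⁻ x, g x ∂ν := by
        simp_rw [← lintegral_map hg (hX _), hν, sum_const, card_univ, nsmul_eq_mul]

theorem ofReal_sum_range_one_div (r : ℕ) :
    ENNReal.ofReal (∑ l ∈ range r, 1 / ((l : ℝ) + 1)) = ∑ l ∈ range r, ((l : ℝ≥0∞) + 1)⁻¹ := by
  rw [ENNReal.ofReal_sum_of_nonneg fun _ _ => by positivity]
  refine sum_congr rfl fun l _ => ?_
  rw [one_div, ENNReal.ofReal_inv_of_pos (by positivity)]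
  norm_cast

theorem combined_pvalue_valid_general
    {Ω : Type*} [MeasurableSpace Ω] (μ : Measure Ω)
    {r : ℕ} (hr : 0 < r) (p : Fin r → Ω → ℝ)
    (hmeas : ∀ i, Measurable (p i))
    (hunif : ∀ i, Measure.map (p i) μ
      = MeasureTheory.volume.restrict (Set.Icc (0 : ℝ) 1))
    (Q : Ω → ℝ)
    (hQ : Q = fun ω =>
      (∑ i' ∈ Finset.range r, (1 : ℝ) / (i' + 1)) *
        Finset.univ.inf' (Finset.univ_nonempty_iff.mpr ⟨⟨0, hr⟩⟩)
          (fun i : Fin r =>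
            ((r : ℝ) / (i.1 + 1)) *
              (fun j => p j ω) (Tuple.sort (fun j => p j ω) i))) :
    ∀ α ∈ Set.Ioo (0 : ℝ) 1, μ {ω | Q ω ≤ α} ≤ ENNReal.ofReal α := by
  rintro α ⟨hα, -⟩
  set H := ∑ l ∈ range r, 1 / ((l : ℝ) + 1)
  have hH : 0 < H := sum_pos (fun _ _ => by positivity) (nonempty_range_iff.2 hr.ne')
  set s := α / (H * r)
  have hQ_sub : {ω | Q ω ≤ α} ≤ᵐ[μ] {ω | 1 ≤ ∑ j, harmonicStep r s (p j ω)} := by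
    filter_upwards [ae_all_iff.2 fun j =>
      ae_nonneg_of_map_eq_restrict_Icc (hmeas j).aemeasurable (hunif j)] with ω hp hQω
    change Q ω ≤ α at hQω
    rw [hQ] at hQω
    exact one_le_sum_harmonicStep s (fun j => p j ω) hp
      (exists_sort_le_of_mul_inf'_le _ (fun j => p j ω) hH hQω)
  calc μ {ω | Q ω ≤ α} ≤ μ {ω | 1 ≤ ∑ j, harmonicStep r s (p j ω)} := measure_mono_ae hQ_sub
    _ ≤ r * ∫⁻ x, harmonicStep r s x ∂volume.restrict (Set.Icc 0 1) := by
        simpa using measure_one_le_sum_le_card_mul_lintegral hmeas hunif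
          (measurable_harmonicStep r s)
    _ ≤ r * ∫⁻ x, harmonicStep r s x := by gcongr; exact Measure.restrict_le_self
    _ = ENNReal.ofReal (r * H * s) := by
        rw [lintegral_harmonicStep, ← ofReal_sum_range_one_div, ← ENNReal.ofReal_natCast,
          ← ENNReal.ofReal_mul (by positivity), ← ENNReal.ofReal_mul (by positivity), mul_assoc]
    _ = ENNReal.ofReal α := by
        have : (r : ℝ) ≠ 0 := by positivity
        congr 1
        simp only [s]
        field_simp

/-- Combined p-value with harmonic penalty: if `p 0, …, p (r-1)` are (possibly
dependent) random variables each uniformly distributed on `[0,1]`, and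
`Q = (∑_{i'=1}^r 1/i') ⬝ min_i (r/i) p_(i)` where `p_(i)` are the order
statistics, then `P(Q ≤ α) ≤ α` for all `α ∈ (0,1)`. -/
theorem combined_pvalue_valid
    {Ω : Type*} [MeasurableSpace Ω] (μ : Measure Ω) [IsProbabilityMeasure μ]
    {r : ℕ} (hr : 0 < r) (p : Fin r → Ω → ℝ)
    (hmeas : ∀ i, Measurable (p i))
    (hunif : ∀ i, Measure.map (p i) μ
      = MeasureTheory.volume.restrict (Set.Icc (0 : ℝ) 1))
    (Q : Ω → ℝ)
    (hQ : Q = fun ω =>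
      (∑ i' ∈ Finset.range r, (1 : ℝ) / (i' + 1)) *
        Finset.univ.inf' (Finset.univ_nonempty_iff.mpr ⟨⟨0, hr⟩⟩)
          (fun i : Fin r =>
            ((r : ℝ) / (i.1 + 1)) *
              (fun j => p j ω) (Tuple.sort (fun j => p j ω) i))) :
    ∀ α ∈ Set.Ioo (0 : ℝ) 1, μ {ω | Q ω ≤ α} ≤ ENNReal.ofReal α :=
  combined_pvalue_valid_general μ hr p hmeas hunif Q hQ
end

section
/- If U is uniformly distributed on [0,1] and α ∈ (0,1), r ∈ ℕ with r ≥ 1, then E[ max_{1 ≤ i ≤ r} 1{U ≤ α i / r} / (i/r) ] = α ∑_{i=1}^r 1/i. -/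
/-!
On the step `(α k / r, α (k + 1) / r]`, `k < r`, the indicators with `i ≤ k` vanish and among the
others the largest value `r / i` is at `i = k + 1`, so the maximum is the constant `r / (k + 1)`;
above `α` every indicator vanishes. Each of the `r` steps has length `α / r` and so contributes
`α / (k + 1)` to the integral over `[0, 1]`.
-/

open MeasureTheory Finset
open scoped Interval

noncomputable def maxScaledIndicator (α : ℝ) {r : ℕ} (hr : 0 < r) (u : ℝ) : ℝ :=
  univ.sup' (univ_nonempty_iff.mpr ⟨⟨0, hr⟩⟩) fun i : Fin r =>
    (if u ≤ α * (i.1 + 1) / r then (1 : ℝ) else 0) / ((i.1 + 1) / r)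

section

variable {α : ℝ} {r : ℕ} (hr : 0 < r)

theorem measurable_maxScaledIndicator : Measurable (maxScaledIndicator α hr) := by
  have : maxScaledIndicator α hr = univ.sup' (univ_nonempty_iff.mpr ⟨⟨0, hr⟩⟩)
      fun (i : Fin r) (u : ℝ) => (if u ≤ α * (i.1 + 1) / r then (1 : ℝ) else 0) / ((i.1 + 1) / r) := by
    ext u
    simp only [maxScaledIndicator, Finset.sup'_apply]
  rw [this]
  exact Finset.measurable_sup' _ fun i _ =>
    (Measurable.ite measurableSet_Iic measurable_const measurable_const).div_const _

theorem maxScaledIndicator_eq_of_mem_Ioc (hα : 0 < α) {k : ℕ} (hk : k < r) {u : ℝ}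
    (hu : u ∈ Set.Ioc (α * k / r) (α * (k + 1) / r)) :
    maxScaledIndicator α hr u = r / (k + 1) := by
  have hr' : (0 : ℝ) < r := by exact_mod_cast hr
  apply le_antisymm
  · refine Finset.sup'_le _ _ fun i _ => ?_
    split_ifs with hi
    · have hki : (k : ℝ) < i.1 + 1 :=
        (mul_lt_mul_iff_of_pos_left hα).1 ((div_lt_div_iff_of_pos_right hr').1 (hu.1.trans_le hi))
      have hki' : k ≤ i.1 := Nat.lt_succ_iff.1 (by exact_mod_cast hki)
      rw [one_div_div]
      gcongr
    · rw [zero_div]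
      positivity
  · refine le_trans ?_ (Finset.le_sup' _ (mem_univ ⟨k, hk⟩))
    simp [if_pos hu.2]

theorem maxScaledIndicator_eq_zero_of_lt (hα : 0 ≤ α) {u : ℝ} (hu : α < u) :
    maxScaledIndicator α hr u = 0 := by
  have hr' : (0 : ℝ) < r := by exact_mod_cast hr
  have hnot_le : ∀ i : Fin r, ¬ u ≤ α * (i.1 + 1) / r := fun i hi => by
    have hi_le : (i.1 : ℝ) + 1 ≤ r := by exact_mod_cast i.2
    have : α * (i.1 + 1) / r ≤ α := by
      rw [div_le_iff₀ hr']
      nlinarith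
    linarith
  simp [maxScaledIndicator, hnot_le]

theorem ae_maxScaledIndicator_eq_of_mem_step (hα : 0 < α) {k : ℕ} (hk : k < r) :
    ∀ᵐ u, u ∈ Ι (α * k / r) (α * (k + 1) / r) → maxScaledIndicator α hr u = r / (k + 1) := by
  refine Filter.Eventually.of_forall fun u hu => maxScaledIndicator_eq_of_mem_Ioc hr hα hk ?_
  rwa [Set.uIoc_of_le (by gcongr; linarith)] at hu

theorem intervalIntegrable_maxScaledIndicator_step (hα : 0 < α) {k : ℕ} (hk : k < r) :
    IntervalIntegrable (maxScaledIndicator α hr) volume (α * k / r) (α * (k + 1) / r) :=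
  (intervalIntegrable_const (c := (r : ℝ) / (k + 1))).congr_ae <|
    (ae_restrict_iff' measurableSet_uIoc).2 <|
      (ae_maxScaledIndicator_eq_of_mem_step hr hα hk).mono fun _ h hu => (h hu).symm

theorem integral_maxScaledIndicator_step (hα : 0 < α) {k : ℕ} (hk : k < r) :
    ∫ u in α * k / r..α * (k + 1) / r, maxScaledIndicator α hr u = α / (k + 1) := by
  rw [intervalIntegral.integral_congr_ae (ae_maxScaledIndicator_eq_of_mem_step hr hα hk),
    intervalIntegral.integral_const, smul_eq_mul]
  field_simp
  ring

theorem intervalIntegrable_maxScaledIndicator_zero_self (hα : 0 < α) :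
    IntervalIntegrable (maxScaledIndicator α hr) volume 0 α := by
  have := IntervalIntegrable.trans_iterate (a := fun k : ℕ => α * k / r) (μ := volume)
    fun k hk => by exact_mod_cast intervalIntegrable_maxScaledIndicator_step hr hα hk
  simpa [hr.ne'] using this

theorem integral_maxScaledIndicator_zero_self (hα : 0 < α) :
    ∫ u in 0..α, maxScaledIndicator α hr u = α * ∑ k ∈ range r, (1 : ℝ) / (k + 1) := by
  have hsum := intervalIntegral.sum_integral_adjacent_intervals (a := fun k : ℕ => α * k / r)
    (μ := volume) fun k hk => by exact_mod_cast intervalIntegrable_maxScaledIndicator_step hr hα hk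
  simp only [Nat.cast_zero, mul_zero, zero_div, Nat.cast_add_one] at hsum
  rw [mul_div_cancel_right₀ α (Nat.cast_ne_zero.2 hr.ne'), sum_congr rfl fun k hk =>
    integral_maxScaledIndicator_step hr hα (mem_range.1 hk)] at hsum
  rw [← hsum, mul_sum]
  simp only [mul_one_div]

theorem ae_maxScaledIndicator_eq_zero_of_mem_uIoc (hα : 0 ≤ α) {b : ℝ} (hαb : α ≤ b) :
    ∀ᵐ u, u ∈ Ι α b → maxScaledIndicator α hr u = 0 :=
  Filter.Eventually.of_forall fun _ hu =>
    maxScaledIndicator_eq_zero_of_lt hr hα (Set.uIoc_of_le hαb ▸ hu).1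

theorem intervalIntegrable_maxScaledIndicator_self_of_le (hα : 0 ≤ α) {b : ℝ} (hαb : α ≤ b) :
    IntervalIntegrable (maxScaledIndicator α hr) volume α b :=
  (intervalIntegrable_const (c := (0 : ℝ))).congr_ae <|
    (ae_restrict_iff' measurableSet_uIoc).2 <|
      (ae_maxScaledIndicator_eq_zero_of_mem_uIoc hr hα hαb).mono fun _ h hu => (h hu).symm

theorem integral_maxScaledIndicator_self_of_le (hα : 0 ≤ α) {b : ℝ} (hαb : α ≤ b) :
    ∫ u in α..b, maxScaledIndicator α hr u = 0 := by
  rw [intervalIntegral.integral_congr_ae (ae_maxScaledIndicator_eq_zero_of_mem_uIoc hr hα hαb),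
    intervalIntegral.integral_zero]

end

theorem expectation_max_indicator_uniform_general
    {Ω : Type*} [MeasurableSpace Ω] (μ : Measure Ω)
    (U : Ω → ℝ) (hU : Measure.map U μ
      = MeasureTheory.volume.restrict (Set.Icc (0 : ℝ) 1))
    (hUmeas : Measurable U)
    {r : ℕ} (hr : 0 < r) (α : ℝ) (hα : α ∈ Set.Ioo (0 : ℝ) 1) :
    ∫ ω, (Finset.univ.sup' (Finset.univ_nonempty_iff.mpr ⟨⟨0, hr⟩⟩)
        (fun i : Fin r =>
          (if U ω ≤ α * (i.1 + 1) / r then (1 : ℝ) else 0) / ((i.1 + 1) / r))) ∂μ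
      = α * ∑ i ∈ Finset.range r, (1 : ℝ) / (i + 1) := by
  obtain ⟨hα0, hα1⟩ := hα
  change ∫ ω, maxScaledIndicator α hr (U ω) ∂μ = _
  rw [← integral_map hUmeas.aemeasurable (measurable_maxScaledIndicator hr).aestronglyMeasurable,
    hU, integral_Icc_eq_integral_Ioc, ← intervalIntegral.integral_of_le zero_le_one,
    ← intervalIntegral.integral_add_adjacent_intervals
      (intervalIntegrable_maxScaledIndicator_zero_self hr hα0)
      (intervalIntegrable_maxScaledIndicator_self_of_le hr hα0.le hα1.le),
    integral_maxScaledIndicator_zero_self hr hα0,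
    integral_maxScaledIndicator_self_of_le hr hα0.le hα1.le, add_zero]

/-- If `U ~ Uniform(0,1)`, `α ∈ (0,1)` and `r ≥ 1`, then
`E[max_{1 ≤ i ≤ r} 1{U ≤ α i/r} / (i/r)] = α ∑_{i=1}^r 1/i`
(the max being `0` when all indicators vanish). -/
theorem expectation_max_indicator_uniform
    {Ω : Type*} [MeasurableSpace Ω] (μ : Measure Ω) [IsProbabilityMeasure μ]
    (U : Ω → ℝ) (hU : Measure.map U μ
      = MeasureTheory.volume.restrict (Set.Icc (0 : ℝ) 1))
    (hUmeas : Measurable U)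
    {r : ℕ} (hr : 0 < r) (α : ℝ) (hα : α ∈ Set.Ioo (0 : ℝ) 1) :
    ∫ ω, (Finset.univ.sup' (Finset.univ_nonempty_iff.mpr ⟨⟨0, hr⟩⟩)
        (fun i : Fin r =>
          (if U ω ≤ α * (i.1 + 1) / r then (1 : ℝ) else 0) / ((i.1 + 1) / r))) ∂μ
      = α * ∑ i ∈ Finset.range r, (1 : ℝ) / (i + 1) :=
  expectation_max_indicator_uniform_general μ U hU hUmeas hr α hα
end
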